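/- Let q be a positive integer, let z_1,…,z_q be i.i.d. random variables each uniformly distributed over {+1, −1}, and let a_1 ≥ a_2 ≥ … ≥ a_q > 0 be real constants. For i = 1,…,q define p_i := Pr(−a_1 ≤ a_1·Σ_{j=1}^i z_j + (a_1/a_i)·Σ_{j=i+1}^q a_j z_j < a_1). Then p_i is monotone decreasing in i, i.e., p_i ≥ p_{i+1} for every i ∈ {1,…,q−1}. -/

import Mathlib

open Finset
open scoped Classical

/-- Interpretation of a Boolean as `±1 ∈ ℝ`. -/
def pm (b : Bool) : ℝ := if b then 1 else -1

/-- The random quantity `a_1·Σ_{j=1}^{i} z_j + (a_1/a_i)·Σ_{j=i+1}^{q} a_j z_j`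
(indices `0`-based: `a 0` plays the role of `a_1`). -/
noncomputable def Tsum (q : ℕ) [NeZero q] (a : Fin q → ℝ) (i : Fin q)
    (z : Fin q → Bool) : ℝ :=
  a 0 * (∑ j ∈ Finset.univ.filter (fun j => j ≤ i), pm (z j)) +
    (a 0 / a i) * (∑ j ∈ Finset.univ.filter (fun j => i < j), a j * pm (z j))

/-- `p_i = Pr(−a_1 ≤ a_1·Σ_{j=1}^{i} z_j + (a_1/a_i)·Σ_{j=i+1}^{q} a_j z_j < a_1)`, the
proportion of sign vectors `z ∈ {+1,−1}^q` satisfying the two inequalities. -/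
noncomputable def pseq (q : ℕ) [NeZero q] (a : Fin q → ℝ) (i : Fin q) : ℝ :=
  ((Finset.univ.filter (fun z : Fin q → Bool =>
      -(a 0) ≤ Tsum q a i z ∧ Tsum q a i z < a 0)).card : ℝ) / 2 ^ q

/-!
Put `k = i + 1`, `S = Σ_{j ≤ i} z_j` and `U = Σ_{j > i} a_j z_j`. After dividing by `a_1`, the
event defining `p_k` is `S + U / a_k ∈ [-1, 1)` and the one defining `p_i` is
`S + b · (U / a_k) ∈ [-1, 1)` with `b = a_k / a_i ∈ (0, 1]`. Since `S` is independent of `U`, it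
suffices to compare `P(S + x ∈ [-1, 1))` with `P(S + b x ∈ [-1, 1))` for a fixed real `x`.
If `S` is a sum of `m` signs with `n` of them positive, then `S = 2n - m`, and the half-open
window of length 2 catches exactly one level, `n = ⌈(m - 1 - y) / 2⌉` for the shift `y`. Moving
the shift from `x` to `b x` moves this level monotonically towards `⌈(m - 1) / 2⌉`, and binomial
coefficients increase towards the centre.
-/

namespace Nat

theorem choose_le_choose_right_of_le_of_two_mul_le {n r s : ℕ} (hrs : r ≤ s)
    (hs : 2 * s ≤ n + 1) : n.choose r ≤ n.choose s := by
  induction s, hrs using Nat.le_induction with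
  | base => exact le_rfl
  | succ s hrs ih =>
    refine (ih (by omega)).trans ?_
    rcases Nat.lt_or_ge (2 * s + 1) n with h | h
    · exact choose_le_succ_of_lt_half_left (by omega)
    · rw [show n = 2 * s + 1 by omega, choose_symm_half]

theorem choose_le_choose_right_of_le_of_le_two_mul {n r s : ℕ} (hsr : s ≤ r)
    (hs : n ≤ 2 * s + 1) : n.choose r ≤ n.choose s := by
  rcases Nat.lt_or_ge n r with hnr | hrn
  · simp [choose_eq_zero_of_lt hnr]
  rw [← choose_symm hrn, ← choose_symm (hsr.trans hrn)]
  exact choose_le_choose_right_of_le_of_two_mul_le (by omega) (by omega)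

end Nat

theorem card_fun_bool_card_eq_choose (ι : Type*) [Fintype ι] [DecidableEq ι] (n : ℕ) :
    #{s : ι → Bool | #{j | s j} = n} = (Fintype.card ι).choose n := by
  rw [← Finset.card_univ, ← Finset.card_powersetCard]
  refine Finset.card_nbij' (fun s => ({j | s j} : Finset ι)) (fun A j => j ∈ A) ?_ ?_ ?_ ?_ <;>
    intro x hx <;> simp_all

theorem sum_pm_eq (ι : Type*) [Fintype ι] (s : ι → Bool) :
    ∑ j, pm (s j) = 2 * (#{j | s j} : ℝ) - Fintype.card ι := by
  simp only [pm, Finset.sum_ite, Finset.sum_const, nsmul_eq_mul, mul_one, mul_neg]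
  rw [← card_univ, ← card_filter_add_card_filter_not (s := univ) (fun j => s j = true)]
  push_cast
  ring

theorem mem_Ico_iff_eq_ceil {m : ℕ} {n : ℤ} {y : ℝ} :
    2 * (n : ℝ) - m + y ∈ Set.Ico (-1) 1 ↔ n = ⌈((m : ℝ) - 1 - y) / 2⌉ := by
  rw [eq_comm, Int.ceil_eq_iff, Set.mem_Ico]
  constructor <;> rintro ⟨h₁, h₂⟩ <;> constructor <;> linarith

theorem exists_choose_le_choose_of_mem_Ico {m n : ℕ} {x b : ℝ} (hb₀ : 0 ≤ b) (hb₁ : b ≤ 1)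
    (hn : 2 * (n : ℝ) - m + x ∈ Set.Ico (-1) 1) :
    ∃ n' : ℕ, 2 * (n' : ℝ) - m + b * x ∈ Set.Ico (-1) 1 ∧ m.choose n ≤ m.choose n' := by
  set c := ⌈((m : ℝ) - 1) / 2⌉
  have hc : m ≤ 2 * c + 1 ∧ 2 * c < m + 2 := by
    have h₁ := Int.le_ceil (((m : ℝ) - 1) / 2)
    have h₂ := Int.ceil_lt_add_one (((m : ℝ) - 1) / 2)
    constructor
    · exact_mod_cast (show ((m : ℤ) : ℝ) ≤ ((2 * c + 1 : ℤ) : ℝ) by push_cast; linarith)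
    · exact_mod_cast (show ((2 * c : ℤ) : ℝ) < ((m + 2 : ℤ) : ℝ) by push_cast; linarith)
  set k := ⌈((m : ℝ) - 1 - b * x) / 2⌉
  have hnk : (n : ℤ) ≤ k ∧ k ≤ c ∨ c ≤ k ∧ k ≤ n := by
    rw [mem_Ico_iff_eq_ceil.mp hn]
    rcases le_total 0 x with hx | hx
    · left
      constructor <;> apply Int.ceil_mono <;> nlinarith
    · right
      constructor <;> apply Int.ceil_mono <;> nlinarith
  refine ⟨k.toNat, ?_, ?_⟩
  · have hk : ((k.toNat : ℕ) : ℝ) = (k : ℝ) := by exact_mod_cast Int.toNat_of_nonneg (by omega)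
    rw [hk, mem_Ico_iff_eq_ceil]
  · rcases hnk with ⟨h₁, h₂⟩ | ⟨h₁, h₂⟩
    · exact Nat.choose_le_choose_right_of_le_of_two_mul_le (by omega) (by omega)
    · exact Nat.choose_le_choose_right_of_le_of_le_two_mul (by omega) (by omega)

theorem card_sum_pm_add_mem_Ico_le (ι : Type*) [Fintype ι] [DecidableEq ι] (x : ℝ) {b : ℝ}
    (hb₀ : 0 ≤ b) (hb₁ : b ≤ 1) :
    #{s : ι → Bool | ∑ j, pm (s j) + x ∈ Set.Ico (-1) 1} ≤
      #{s : ι → Bool | ∑ j, pm (s j) + b * x ∈ Set.Ico (-1) 1} := by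
  have card_eq_choose (y : ℝ) (n : ℕ) (hn : 2 * (n : ℝ) - Fintype.card ι + y ∈ Set.Ico (-1) 1) :
      #{s : ι → Bool | ∑ j, pm (s j) + y ∈ Set.Ico (-1) 1} = (Fintype.card ι).choose n := by
    rw [← card_fun_bool_card_eq_choose]
    congr 1; ext s
    have h := mem_Ico_iff_eq_ceil (m := Fintype.card ι) (n := #{j | s j}) (y := y)
    push_cast at h
    simp only [mem_filter, mem_univ, true_and, sum_pm_eq]
    rw [h, ← mem_Ico_iff_eq_ceil.mp hn, Nat.cast_inj]
  obtain hempty | ⟨s₀, hs₀⟩ :=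
    (filter (fun s : ι → Bool => ∑ j, pm (s j) + x ∈ Set.Ico (-1) 1) univ).eq_empty_or_nonempty
  · rw [hempty, card_empty]
    exact Nat.zero_le _
  have hs₀' : 2 * (#{j | s₀ j} : ℝ) - Fintype.card ι + x ∈ Set.Ico (-1) 1 := by
    simpa [sum_pm_eq] using hs₀
  obtain ⟨n', hn', hle⟩ := exists_choose_le_choose_of_mem_Ico hb₀ hb₁ hs₀'
  rwa [card_eq_choose x _ hs₀', card_eq_choose (b * x) n' hn']

theorem card_filter_le_of_forall_slice {γ α β : Type*} [Fintype γ] [Fintype α] [Fintype β]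
    (e : γ ≃ α × β) {P Q : γ → Prop} [DecidablePred P] [DecidablePred Q]
    (h : ∀ b, #{a | P (e.symm (a, b))} ≤ #{a | Q (e.symm (a, b))}) :
    #{z | P z} ≤ #{z | Q z} := by
  rw [card_equiv e (t := {w | P (e.symm w)}) (by simp),
    card_equiv e (t := {w | Q (e.symm w)}) (by simp), card_filter, card_filter,
    Fintype.sum_prod_type_right, Fintype.sum_prod_type_right]
  exact sum_le_sum fun b _ => by simpa only [card_filter] using h b

theorem card_sum_pm_add_mem_Ico_le_of_indep {ι : Type*} [Fintype ι] [DecidableEq ι]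
    (p : ι → Prop) [DecidablePred p] (X : (ι → Bool) → ℝ)
    (hX : ∀ z z', (∀ j, ¬ p j → z j = z' j) → X z = X z')
    {b : ℝ} (hb₀ : 0 ≤ b) (hb₁ : b ≤ 1) :
    #{z : ι → Bool | ∑ j ∈ univ.filter p, pm (z j) + X z ∈ Set.Ico (-1) 1} ≤
      #{z : ι → Bool | ∑ j ∈ univ.filter p, pm (z j) + b * X z ∈ Set.Ico (-1) 1} := by
  set e := Equiv.piEquivPiSubtypeProd p (fun _ => Bool)
  have head_sum (h : {j // p j} → Bool) (t : {j // ¬ p j} → Bool) :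
      ∑ j ∈ univ.filter p, pm (e.symm (h, t) j) = ∑ j, pm (h j) := by
    rw [Finset.sum_subtype (p := p) (univ.filter p) (by simp)]
    exact Fintype.sum_congr _ _ fun j => by simp [e, Equiv.piEquivPiSubtypeProd_symm_apply, j.2]
  have tail_indep (h : {j // p j} → Bool) (t : {j // ¬ p j} → Bool) :
      X (e.symm (h, t)) = X (e.symm (fun _ => false, t)) :=
    hX _ _ fun j hj => by simp [e, Equiv.piEquivPiSubtypeProd_symm_apply, hj]
  refine card_filter_le_of_forall_slice e fun t => ?_
  simp only [head_sum, tail_indep]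
  exact card_sum_pm_add_mem_Ico_le _ _ hb₀ hb₁

theorem neg_le_mul_and_mul_lt_iff {c u : ℝ} (hc : 0 < c) :
    (-c ≤ c * u ∧ c * u < c) ↔ u ∈ Set.Ico (-1) 1 := by
  rw [Set.mem_Ico]
  constructor <;> rintro ⟨h₁, h₂⟩ <;> constructor <;> nlinarith

section

variable {q : ℕ} [NeZero q] (a : Fin q → ℝ)

theorem Tsum_eq (i : Fin q) (z : Fin q → Bool) :
    Tsum q a i z = a 0 * (∑ j ∈ univ.filter (· ≤ i), pm (z j) +
      (∑ j ∈ univ.filter (i < ·), a j * pm (z j)) / a i) := by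
  rw [Tsum]
  ring

theorem Tsum_succ_eq {i k : Fin q} (hik : (i : ℕ) + 1 = k) (hk : a k ≠ 0) (z : Fin q → Bool) :
    Tsum q a k z = a 0 * (∑ j ∈ univ.filter (· ≤ i), pm (z j) +
      (∑ j ∈ univ.filter (i < ·), a j * pm (z j)) / a k) := by
  have head : univ.filter (· ≤ k) = insert k (univ.filter (· ≤ i)) := by
    ext j
    simp only [mem_filter, mem_univ, true_and, mem_insert, Fin.le_def, Fin.ext_iff]
    omega
  have tail : univ.filter (i < ·) = insert k (univ.filter (k < ·)) := by
    ext j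
    simp only [mem_filter, mem_univ, true_and, mem_insert, Fin.lt_def, Fin.ext_iff]
    omega
  have hk_head : k ∉ univ.filter (· ≤ i) := by
    simp only [mem_filter, mem_univ, true_and, Fin.le_def]
    omega
  rw [Tsum, head, tail, sum_insert hk_head, sum_insert (by simp)]
  field_simp
  ring

end

/-- Claim 1: if `a_1 ≥ a_2 ≥ … ≥ a_q > 0`, then `p_i` is monotone
decreasing in `i`, i.e. `p_{i+1} ≤ p_i` for every `i ∈ {1,…,q−1}`. -/
theorem statement15 (q : ℕ) [NeZero q] (a : Fin q → ℝ)
    (hpos : ∀ i, 0 < a i) (hanti : ∀ i j : Fin q, i ≤ j → a j ≤ a i) :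
    ∀ i : Fin q, ∀ h : (i : ℕ) + 1 < q, pseq q a ⟨(i : ℕ) + 1, h⟩ ≤ pseq q a i := by
  intro i h
  set k : Fin q := ⟨(i : ℕ) + 1, h⟩
  set X : (Fin q → Bool) → ℝ := fun z => (∑ j ∈ univ.filter (i < ·), a j * pm (z j)) / a k
  have hX : ∀ z z', (∀ j, ¬ j ≤ i → z j = z' j) → X z = X z' := fun z z' hzz' => by
    simp only [X]
    congr 1
    exact sum_congr rfl fun j hj => by rw [hzz' j (not_le.mpr (mem_filter.mp hj).2)]
  have cond_k (z : Fin q → Bool) : (-(a 0) ≤ Tsum q a k z ∧ Tsum q a k z < a 0) ↔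
      ∑ j ∈ univ.filter (· ≤ i), pm (z j) + X z ∈ Set.Ico (-1) 1 := by
    rw [Tsum_succ_eq a rfl (hpos k).ne', neg_le_mul_and_mul_lt_iff (hpos 0)]
  have cond_i (z : Fin q → Bool) : (-(a 0) ≤ Tsum q a i z ∧ Tsum q a i z < a 0) ↔
      ∑ j ∈ univ.filter (· ≤ i), pm (z j) + a k / a i * X z ∈ Set.Ico (-1) 1 := by
    have hXk : a k / a i * X z = (∑ j ∈ univ.filter (i < ·), a j * pm (z j)) / a i := by
      simp only [X]
      field_simp [(hpos k).ne']
    rw [Tsum_eq, neg_le_mul_and_mul_lt_iff (hpos 0), hXk]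
  unfold pseq
  gcongr 1
  rw [filter_congr fun z _ => cond_k z, filter_congr fun z _ => cond_i z]
  exact_mod_cast card_sum_pm_add_mem_Ico_le_of_indep (· ≤ i) X hX
    (div_nonneg (hpos k).le (hpos i).le)
    ((div_le_one (hpos i)).mpr (hanti i k (Fin.le_def.mpr (Nat.le_succ _))))
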